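/- Let ρ₊, ρ₋ ∈ [0,1) with ρ₊ + ρ₋ < 1. Define the corrected loss ℓ̃(q̂, q̃) = ((1 - ρ_{-q̃}) ℓ(q̂, q̃) - ρ_{q̃} ℓ(q̂, -q̃)) / (1 - ρ₊ - ρ₋), where for q̃ = +1 we use ρ_{q̃} = ρ₊, ρ_{-q̃} = ρ₋ and vice versa. If the noisy label q̃ satisfies P(q̃ = -1 | q = +1) = ρ₊ and P(q̃ = +1 | q = -1) = ρ₋, then for any fixed prediction q̂ and any true label q ∈ {+1, -1}, the expectation of ℓ̃(q̂, q̃) over the noise distribution equals ℓ(q̂, q). -/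
import Mathlib

/-- The corrected (unbiased) loss of Natarajan et al., Eq. (16) of the paper:
`ℓ̃(q̂, q̃) = ((1 - ρ_{-q̃}) ℓ(q̂, q̃) - ρ_{q̃} ℓ(q̂, -q̃)) / (1 - ρ₊ - ρ₋)`,
where `ρ_{q̃} = ρ₊` if `q̃ = +1` and `ρ₋` if `q̃ = -1`. -/
noncomputable def correctedLoss (ℓ : ℝ → ℝ → ℝ) (ρp ρm : ℝ) (x s : ℝ) : ℝ :=
  ((1 - (if s = 1 then ρm else ρp)) * ℓ x s - (if s = 1 then ρp else ρm) * ℓ x (-s)) /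
    (1 - ρp - ρm)

/-- Unbiasedness of the corrected loss: for any clean label `q ∈ {+1, -1}`, the
expectation of `ℓ̃(q̂, q̃)` over the noise distribution (which keeps `q` with probability
`1 - ρ_q` and flips it with probability `ρ_q`) equals `ℓ(q̂, q)`. -/
theorem stmt_0 (ℓ : ℝ → ℝ → ℝ) (ρp ρm : ℝ)
    (hρp : 0 ≤ ρp) (hρp1 : ρp < 1) (hρm : 0 ≤ ρm) (hρm1 : ρm < 1)
    (hsum : ρp + ρm < 1)
    (x q : ℝ) (hq : q = 1 ∨ q = -1) :
    (1 - (if q = 1 then ρp else ρm)) * correctedLoss ℓ ρp ρm x q +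
      (if q = 1 then ρp else ρm) * correctedLoss ℓ ρp ρm x (-q) = ℓ x q := by
  have hd : 1 - ρp - ρm ≠ 0 := by linarith
  rcases hq with rfl | rfl <;>
    simp only [correctedLoss] <;> norm_num <;> field_simp <;> ring
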